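/- For any 1 ≤ i < j ≤ n, the answer to RMQ(i,j) is the unique index k in [i,j] that is not the answer to any second-minimum query R2M(i',j') with i ≤ i' < j' ≤ j. -/

import Mathlib

inductive BT where
  | leaf : BT
  | node : BT → BT → BT
deriving DecidableEq

namespace BT

/-- Number of nodes. -/
def size : BT → ℕ
  | leaf => 0
  | node l r => l.size + r.size + 1

/-- Inorder list of node positions (paths from the root; `false` = left step). -/
def inList : BT → List (List Bool)
  | leaf => []
  | node l r => (l.inList).map (List.cons false) ++ [] :: (r.inList).map (List.cons true)

/-- Preorder list of node positions. -/
def preList : BT → List (List Bool)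
  | leaf => []
  | node l r => [] :: ((l.preList).map (List.cons false) ++ (r.preList).map (List.cons true))

/-- Subtree rooted at a given position, if the position is valid. -/
def subtree? : BT → List Bool → Option BT
  | t, [] => some t
  | leaf, _ :: _ => none
  | node l r, b :: p => if b then r.subtree? p else l.subtree? p

/-- Size of the left spine (maximal path following left children, top node included). -/
def Lspine : BT → ℕ
  | leaf => 0
  | node l _ => l.Lspine + 1

/-- Size of the right spine. -/
def Rspine : BT → ℕ
  | leaf => 0
  | node _ r => r.Rspine + 1

/-- Size of the left inner spine of the root: right spine of the left child. -/
def lv : BT → ℕ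
  | leaf => 0
  | node l _ => l.Rspine

/-- Size of the right inner spine of the root: left spine of the right child. -/
def rv : BT → ℕ
  | leaf => 0
  | node _ r => r.Lspine

/-- Sum of `f` over all (sub)trees rooted at nodes of the tree. -/
def sumNodes (f : BT → ℕ) : BT → ℕ
  | leaf => 0
  | node l r => f (node l r) + sumNodes f l + sumNodes f r

/-- Number of leaf nodes (nodes with no children). -/
def leaves : BT → ℕ
  | leaf => 0
  | node leaf leaf => 1
  | node l r => leaves l + leaves r

end BT

/-- Longest common prefix of two paths: the LCA of two positions in a binary tree. -/
def lcp : List Bool → List Bool → List Bool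
  | a :: p, b :: q => if a = b then a :: lcp p q else []
  | _, _ => []

/-- Index of the minimum element of a list (0 if empty). -/
def minIdx {α : Type*} [LinearOrder α] (l : List α) : ℕ :=
  match l.argmin id with
  | none => 0
  | some a => l.idxOf a

/-- Cartesian tree construction with fuel. -/
def cartesianAux {α : Type*} [LinearOrder α] : ℕ → List α → BT
  | 0, _ => .leaf
  | _ + 1, [] => .leaf
  | n + 1, l@(_ :: _) =>
      .node (cartesianAux n (l.take (minIdx l))) (cartesianAux n (l.drop (minIdx l + 1)))

/-- The Cartesian tree of a list: root at the position of the minimum,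
recursively built on the prefix before and the suffix after the minimum. -/
def cartesian {α : Type*} [LinearOrder α] (l : List α) : BT :=
  cartesianAux l.length l

/-- `k` is the position of the minimum of `A` on the range `[i, j]`. -/
def isArgmin {α : Type*} [LinearOrder α] {n : ℕ} (A : Fin n → α) (i j k : Fin n) : Prop :=
  i ≤ k ∧ k ≤ j ∧ ∀ m, i ≤ m → m ≤ j → A k ≤ A m

/-- `k` is the position of the second smallest element of `A` on the range `[i, j]`. -/
def isSecondMin {α : Type*} [LinearOrder α] {n : ℕ} (A : Fin n → α) (i j k : Fin n) : Prop :=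
  i ≤ k ∧ k ≤ j ∧
    ∃ m, isArgmin A i j m ∧ k ≠ m ∧ ∀ l, i ≤ l → l ≤ j → l ≠ m → A k ≤ A l

/-- The node with inorder number `i` in `t` has a left child. -/
def hasLeftChildAt (t : BT) (i : ℕ) : Prop :=
  ∃ (p : List Bool) (ll lr r : BT),
    t.inList[i]? = some p ∧ t.subtree? p = some (.node (.node ll lr) r)

/-!
The minimum of `A` on `[i, j]` stays the minimum on every subwindow containing it, so it is
never a second minimum there. Conversely, if some `m ∈ [i, j]` has `A m < A k`, take such an `m`
nearest to `k`: on the window spanned by `m` and `k`, `m` is the minimum and `k` the second one.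
-/

open Finset in
theorem exists_nearest_mem_uIcc {ι : Type*} [LinearOrder ι] [LocallyFiniteOrder ι]
    (p : ι → Prop) {a b : ι} (ha : p a) :
    ∃ c ∈ uIcc a b, p c ∧ ∀ l ∈ uIcc c b, p l → l = c := by
  classical
  -- take `c` nearest to `b`, nearness being measured by the size of `uIcc c b`
  obtain ⟨c, hcS, hc⟩ := ((uIcc a b).filter p).exists_min_image (fun l => #(uIcc l b))
    ⟨a, mem_filter.2 ⟨left_mem_uIcc, ha⟩⟩
  obtain ⟨hc_mem, hpc⟩ := mem_filter.1 hcS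
  refine ⟨c, hc_mem, hpc, fun l hl hpl => uIcc_injective_right b ?_⟩
  have hsub : uIcc l b ⊆ uIcc c b := uIcc_subset_uIcc_right hl
  exact eq_of_subset_of_card_le hsub
    (hc l (mem_filter.2 ⟨uIcc_subset_uIcc_right hc_mem hl, hpl⟩))

section RangeQueries

variable {α : Type*} [LinearOrder α] {n : ℕ} {A : Fin n → α} {i j i' j' k m : Fin n}

theorem isArgmin.mono (hk : isArgmin A i j k) (hi : i ≤ i') (hj : j' ≤ j) (hk1 : i' ≤ k)
    (hk2 : k ≤ j') : isArgmin A i' j' k :=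
  ⟨hk1, hk2, fun l hl1 hl2 => hk.2.2 l (hi.trans hl1) (hl2.trans hj)⟩

theorem isArgmin.unique (hA : Function.Injective A) (hk : isArgmin A i j k)
    (hm : isArgmin A i j m) : k = m :=
  hA <| le_antisymm (hk.2.2 m hm.1 hm.2.1) (hm.2.2 k hk.1 hk.2.1)

theorem isArgmin.not_isSecondMin (hA : Function.Injective A) (hk : isArgmin A i j k)
    (hi : i ≤ i') (hj : j' ≤ j) : ¬ isSecondMin A i' j' k := by
  rintro ⟨hk1, hk2, m, hm, hkm, -⟩
  exact hkm ((hk.mono hi hj hk1 hk2).unique hA hm)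

theorem isSecondMin_of_forall_mem_uIcc (hmk : A m < A k)
    (hnear : ∀ l ∈ Finset.uIcc m k, A l < A k → l = m) :
    isSecondMin A (m ⊓ k) (m ⊔ k) k := by
  have hle : ∀ l, m ⊓ k ≤ l → l ≤ m ⊔ k → l ≠ m → A k ≤ A l := fun l hl1 hl2 hlm =>
    not_lt.1 fun hlk => hlm (hnear l (Finset.mem_uIcc.2 ⟨hl1, hl2⟩) hlk)
  refine ⟨inf_le_right, le_sup_right, m, ⟨inf_le_left, le_sup_left, fun l hl1 hl2 => ?_⟩,
    fun hkm => hmk.ne (congrArg A hkm.symm), hle⟩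
  rcases eq_or_ne l m with rfl | hlm
  · exact le_rfl
  · exact hmk.le.trans (hle l hl1 hl2 hlm)

theorem exists_isSecondMin_of_lt (hmk : A m < A k) :
    ∃ i' j', m ⊓ k ≤ i' ∧ i' < j' ∧ j' ≤ m ⊔ k ∧ isSecondMin A i' j' k := by
  obtain ⟨c, hc, hck, hnear⟩ := exists_nearest_mem_uIcc (fun l => A l < A k) hmk
  obtain ⟨hc1, hc2⟩ := Finset.mem_uIcc.1 hc
  have hne : c ≠ k := fun h => hck.ne (congrArg A h)
  exact ⟨c ⊓ k, c ⊔ k, le_inf hc1 inf_le_right, inf_lt_sup.2 hne, sup_le hc2 le_sup_right,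
    isSecondMin_of_forall_mem_uIcc hck hnear⟩

end RangeQueries

theorem stmt10_general {α : Type*} [LinearOrder α] {n : ℕ} (A : Fin n → α)
    (hA : Function.Injective A) (i j : Fin n)
    (k : Fin n) (hk1 : i ≤ k) (hk2 : k ≤ j) :
    isArgmin A i j k ↔
      ∀ i' j' : Fin n, i ≤ i' → i' < j' → j' ≤ j → ¬ isSecondMin A i' j' k := by
  refine ⟨fun hk i' j' hi _ hj => hk.not_isSecondMin hA hi hj, fun h => ⟨hk1, hk2, ?_⟩⟩
  intro m hm1 hm2
  by_contra! hmk
  obtain ⟨i', j', hi', hij', hj', hsec⟩ := exists_isSecondMin_of_lt hmk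
  exact h i' j' ((le_inf hm1 hk1).trans hi') hij' (hj'.trans (sup_le hm2 hk2)) hsec

/-- For `i < j`, `RMQ(i,j)` is the unique index `k ∈ [i,j]` that is not the answer to any
second-minimum query `R2M(i',j')` with `i ≤ i' < j' ≤ j`. -/
theorem stmt10 {α : Type*} [LinearOrder α] {n : ℕ} (A : Fin n → α)
    (hA : Function.Injective A) (i j : Fin n) (hij : i < j)
    (k : Fin n) (hk1 : i ≤ k) (hk2 : k ≤ j) :
    isArgmin A i j k ↔
      ∀ i' j' : Fin n, i ≤ i' → i' < j' → j' ≤ j → ¬ isSecondMin A i' j' k :=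
  stmt10_general A hA i j k hk1 hk2
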